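/- Let q be the cardinality of the residue field of K, and let f : {n ∈ ℕ : n ≥ n₀} → K be an M-power series function. Fix l with 0 < l ≤ pM. Then there exists a power series P ∈ K[[x]], convergent on a closed disc {x ∈ K : |x| ≤ r} for some real r > |p|, such that f(l·q^N) = P(l·q^N) for all sufficiently large N. In particular, the limit lim_{N→∞} f(l·q^N) exists and equals P(0). -/

import Mathlib

/-!
`K` is finite over `ℚ_p`, hence locally compact, so its residue field is finite of characteristic
`p` and `p ∣ q`; since `p ∤ M`, the reduction of `ζ` is still a primitive `M`-th root of unity,
so `M ∣ q - 1`. Hence `l qᴺ ≡ l q (mod pM)` for all `N ≥ 1`: all the points `l qᴺ` lie in a single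
residue class `i` mod `pM`, on which `f = cᵢ(· - i)`. As `|i| ≤ |p| < rᵢ`, the ultrametric
inequality lets us re-expand `cᵢ(x - i)` as a power series `P(x)` converging on the same disc,
and `l qᴺ → 0` because `|q| ≤ |p| < 1`.
-/

open Filter

noncomputable section

variable {K : Type*}

/-- Evaluation of the power series with coefficients `c` at the point `x`, as a `tsum`. -/
def evalPS [NormedField K] (c : ℕ → K) (x : K) : K := ∑' m, c m * x ^ m

/-- The power series with coefficients `c` converges on the closed disc of radius `r`,
i.e. `‖c m‖ * r ^ m → 0`. -/
def PSConvOn [NormedField K] (c : ℕ → K) (r : ℝ) : Prop :=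
  Filter.Tendsto (fun m => ‖c m‖ * r ^ m) Filter.atTop (nhds 0)

/-- `f`, regarded as a function on `{n : ℕ // n₀ ≤ n}`, is an `M`-power series function:
for every `i` with `0 < i ≤ pM` there is a power series `cᵢ` converging on a closed disc of
radius `rᵢ > |p| = 1/p` such that `f a = cᵢ (a - i)` for all `a ≥ n₀` with `pM ∣ a - i`. -/
def IsMPSF (p M n₀ : ℕ) [NormedField K] (f : ℕ → K) : Prop :=
  ∀ i : ℕ, 0 < i → i ≤ p * M →
    ∃ (r : ℝ) (c : ℕ → K), (p : ℝ)⁻¹ < r ∧ PSConvOn c r ∧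
      ∀ a : ℕ, n₀ ≤ a → ((p : ℤ) * M) ∣ ((a : ℤ) - (i : ℤ)) →
        f a = evalPS c ((a : K) - (i : K))

/-- The ring of integers `{x : K // ‖x‖ ≤ 1}` of a nonarchimedean normed field. -/
def ringOfIntegers (K : Type*) [NormedField K] [IsUltrametricDist K] : Subring K where
  carrier := {x : K | ‖x‖ ≤ 1}
  mul_mem' := by
    intro a b ha hb
    simp only [Set.mem_setOf_eq, norm_mul] at *
    calc ‖a‖ * ‖b‖ ≤ 1 * 1 := mul_le_mul ha hb (norm_nonneg b) zero_le_one
    _ = 1 := by ring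
  one_mem' := by simp
  add_mem' := by
    intro a b ha hb
    exact (IsUltrametricDist.norm_add_le_max a b).trans (max_le ha hb)
  zero_mem' := by simp
  neg_mem' := by
    intro a ha
    simpa using ha

/-- The maximal ideal `{x : 𝒪_K // ‖x‖ < 1}` of the ring of integers. -/
def maxIdeal (K : Type*) [NormedField K] [IsUltrametricDist K] :
    Ideal (ringOfIntegers K) where
  carrier := {x | ‖(x : K)‖ < 1}
  zero_mem' := by simp
  add_mem' := by
    intro a b ha hb
    exact lt_of_le_of_lt (IsUltrametricDist.norm_add_le_max (a : K) (b : K)) (max_lt ha hb)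
  smul_mem' := by
    intro c x hx
    simp only [Set.mem_setOf_eq, smul_eq_mul, Subring.coe_mul, norm_mul] at *
    calc ‖(c : K)‖ * ‖(x : K)‖ ≤ 1 * ‖(x : K)‖ :=
          mul_le_mul_of_nonneg_right c.2 (norm_nonneg _)
    _ = ‖(x : K)‖ := one_mul _
    _ < 1 := hx

open Topology

lemma evalPS_zero [NormedField K] (c : ℕ → K) : evalPS c 0 = c 0 := by
  rw [evalPS, tsum_eq_single 0 fun m hm => by simp [hm]]
  simp

namespace PSConvOn

variable [NormedField K] [IsUltrametricDist K] [CompleteSpace K] {c : ℕ → K} {r : ℝ}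

lemma summable (hc : PSConvOn c r) {x : K} (hx : ‖x‖ ≤ r) : Summable fun m => c m * x ^ m := by
  refine NonarchimedeanAddGroup.summable_of_tendsto_cofinite_zero ?_
  rw [Nat.cofinite_eq_atTop, tendsto_zero_iff_norm_tendsto_zero]
  refine squeeze_zero (fun _ => norm_nonneg _) (fun m => ?_) hc
  rw [norm_mul, norm_pow]
  gcongr

lemma continuousAt_evalPS_zero (hr : 0 < r) (hc : PSConvOn c r) : ContinuousAt (evalPS c) 0 := by
  obtain ⟨B, hB⟩ := hc.bddAbove_range
  have hB0 : 0 ≤ B := (mul_nonneg (norm_nonneg _) (pow_nonneg hr.le 0)).trans (hB ⟨0, rfl⟩)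
  have hbound : ∀ x : K, ‖x‖ ≤ r → ‖evalPS c x - evalPS c 0‖ ≤ B * (‖x‖ / r) := by
    intro x hx
    have hx' : 0 ≤ ‖x‖ / r := by positivity
    have hx1 : ‖x‖ / r ≤ 1 := (div_le_one hr).2 hx
    rw [evalPS_zero, evalPS, (hc.summable hx).tsum_eq_zero_add]
    simp only [pow_zero, mul_one, add_sub_cancel_left]
    refine IsUltrametricDist.norm_tsum_le_of_forall_le_of_nonneg (by positivity) fun m => ?_
    calc ‖c (m + 1) * x ^ (m + 1)‖ = ‖c (m + 1)‖ * r ^ (m + 1) * (‖x‖ / r) ^ (m + 1) := by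
          rw [norm_mul, norm_pow, div_pow, mul_assoc, mul_div_cancel₀ _ (by positivity)]
      _ ≤ B * (‖x‖ / r) := by
          gcongr
          · exact hB ⟨m + 1, rfl⟩
          · exact pow_le_of_le_one hx' hx1 m.succ_ne_zero
  rw [ContinuousAt, tendsto_iff_norm_sub_tendsto_zero]
  refine squeeze_zero' (Eventually.of_forall fun _ => norm_nonneg _)
    (eventually_of_mem (Metric.closedBall_mem_nhds 0 hr) fun x hx =>
      hbound x (by simpa using hx)) ?_
  have : Tendsto (fun x : K => B * (‖x‖ / r)) (𝓝 0) (𝓝 (B * (‖(0 : K)‖ / r))) :=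
    ((continuous_norm.tendsto 0).div_const r).const_mul B
  simpa using this

end PSConvOn

open Finset in
theorem Summable.tsum_eq_tsum_sum_antidiagonal {α A : Type*} [AddCommMonoid α] [TopologicalSpace α]
    [ContinuousAdd α] [T3Space α] [AddCommMonoid A] [HasAntidiagonal A] {g : A × A → α}
    (hg : Summable g) : ∑' nm, g nm = ∑' k, ∑ nm ∈ antidiagonal k, g nm := by
  conv_rhs => congr; ext; rw [← Finset.sum_finset_coe, ← tsum_fintype (L := .unconditional _)]
  rw [← HasAntidiagonal.sigmaAntidiagonalEquivProd.tsum_eq g]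
  exact (HasAntidiagonal.sigmaAntidiagonalEquivProd.summable_iff.2 hg).tsum_sigma'
    fun _ => (hasSum_fintype _).summable

open Finset in
lemma tendsto_add_cofinite_atTop : Tendsto (fun nm : ℕ × ℕ => nm.1 + nm.2) cofinite atTop := by
  rw [← Nat.cofinite_eq_atTop]
  exact Tendsto.cofinite_of_finite_preimage_singleton fun k =>
    ((antidiagonal k).finite_toSet.subset fun nm h => by simpa using h).to_subtype

def changeOriginCoeff [NormedField K] (c : ℕ → K) (a : K) (n : ℕ) : K :=
  ∑' m, c (n + m) * ((n + m).choose n : K) * a ^ m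

section ChangeOrigin

variable [NormedField K] [IsUltrametricDist K] {c : ℕ → K} {r : ℝ} {a : K}

lemma norm_mul_choose_mul_pow_le (ha : ‖a‖ ≤ r) (b : K) (k n m : ℕ) :
    ‖b * (k.choose n : K) * a ^ m‖ ≤ ‖b‖ * r ^ m := by
  rw [norm_mul, norm_mul, norm_pow]
  have := IsUltrametricDist.norm_natCast_le_one K (k.choose n)
  calc ‖b‖ * ‖(k.choose n : K)‖ * ‖a‖ ^ m ≤ ‖b‖ * 1 * r ^ m := by gcongr
    _ = ‖b‖ * r ^ m := by rw [mul_one]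

-- The ultrametric inequality bounds `‖changeOriginCoeff c a n‖ rⁿ` by a tail of `‖cₖ‖ rᵏ`,
-- so, unlike over `ℂ`, the re-expanded series keeps the full radius `r`.
lemma PSConvOn.changeOrigin (hr : 0 < r) (hc : PSConvOn c r) (ha : ‖a‖ ≤ r) :
    PSConvOn (changeOriginCoeff c a) r := by
  refine tendsto_order.2 ⟨fun ε hε => Eventually.of_forall fun n =>
    hε.trans_le (mul_nonneg (norm_nonneg _) (pow_nonneg hr.le n)),
    fun ε hε => ?_⟩
  obtain ⟨N, hN⟩ := eventually_atTop.1 ((tendsto_order.1 hc).2 (ε / 2) (half_pos hε))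
  refine eventually_atTop.2 ⟨N, fun n hn => ?_⟩
  have hcoeff : ‖changeOriginCoeff c a n‖ ≤ ε / 2 / r ^ n := by
    refine IsUltrametricDist.norm_tsum_le_of_forall_le_of_nonneg (by positivity) fun m => ?_
    rw [le_div_iff₀ (by positivity)]
    calc ‖c (n + m) * ((n + m).choose n : K) * a ^ m‖ * r ^ n ≤ ‖c (n + m)‖ * r ^ m * r ^ n := by
          gcongr; exact norm_mul_choose_mul_pow_le ha _ _ _ _
      _ = ‖c (n + m)‖ * r ^ (n + m) := by ring
      _ ≤ ε / 2 := (hN _ (hn.trans (Nat.le_add_right n m))).le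
  calc ‖changeOriginCoeff c a n‖ * r ^ n ≤ ε / 2 / r ^ n * r ^ n := by gcongr
    _ = ε / 2 := div_mul_cancel₀ _ (by positivity)
    _ < ε := half_lt_self hε

variable [CompleteSpace K]

lemma PSConvOn.summable_changeOrigin (hc : PSConvOn c r) (ha : ‖a‖ ≤ r) {x : K} (hx : ‖x‖ ≤ r) :
    Summable fun nm : ℕ × ℕ =>
      c (nm.1 + nm.2) * ((nm.1 + nm.2).choose nm.1 : K) * a ^ nm.2 * x ^ nm.1 := by
  refine NonarchimedeanAddGroup.summable_of_tendsto_cofinite_zero ?_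
  rw [tendsto_zero_iff_norm_tendsto_zero]
  have hr : 0 ≤ r := (norm_nonneg a).trans ha
  refine squeeze_zero (fun _ => norm_nonneg _) (fun ⟨n, m⟩ => ?_)
    (hc.comp tendsto_add_cofinite_atTop)
  calc ‖c (n + m) * ((n + m).choose n : K) * a ^ m * x ^ n‖
      ≤ ‖c (n + m)‖ * r ^ m * r ^ n := by
        rw [norm_mul _ (x ^ n), norm_pow]
        exact mul_le_mul (norm_mul_choose_mul_pow_le ha _ _ _ _)
          (pow_le_pow_left₀ (norm_nonneg _) hx n) (by positivity)
          (mul_nonneg (norm_nonneg _) (pow_nonneg hr m))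
    _ = ‖c (n + m)‖ * r ^ (n + m) := by ring

open Finset in
lemma PSConvOn.evalPS_changeOriginCoeff (hc : PSConvOn c r) (ha : ‖a‖ ≤ r) {x : K}
    (hx : ‖x‖ ≤ r) : evalPS (changeOriginCoeff c a) x = evalPS c (x + a) := by
  have hsum := hc.summable_changeOrigin ha hx
  calc evalPS (changeOriginCoeff c a) x
      = ∑' n, ∑' m, c (n + m) * ((n + m).choose n : K) * a ^ m * x ^ n := by
        simp only [evalPS, changeOriginCoeff, ← tsum_mul_right]
    _ = ∑' k, ∑ nm ∈ antidiagonal k,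
          c (nm.1 + nm.2) * ((nm.1 + nm.2).choose nm.1 : K) * a ^ nm.2 * x ^ nm.1 := by
        rw [← hsum.tsum_prod, hsum.tsum_eq_tsum_sum_antidiagonal]
    _ = evalPS c (x + a) := by
        refine tsum_congr fun k => ?_
        rw [(Commute.all x a).add_pow', Finset.mul_sum]
        refine Finset.sum_congr rfl fun nm hnm => ?_
        rw [mem_antidiagonal.1 hnm, nsmul_eq_mul]
        ring

end ChangeOrigin

theorem IsPrimitiveRoot.map_of_natCast_ne_zero {R S F : Type*} [CommRing R] [IsDomain R]
    [CommRing S] [FunLike F R S] [RingHomClass F R S] {ζ : R} {M : ℕ} (h : IsPrimitiveRoot ζ M)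
    (f : F) (hM : (M : S) ≠ 0) : IsPrimitiveRoot (f ζ) M := by
  obtain ⟨n, rfl⟩ : ∃ n, M = n + 1 := Nat.exists_eq_succ_of_ne_zero fun h0 => hM (by simp [h0])
  have hprod : ∏ k ∈ Finset.range n, (1 - f ζ ^ (k + 1)) = ((n + 1 : ℕ) : S) := by
    rw [← map_natCast f, Nat.cast_succ, ← h.prod_one_sub_pow_eq_order, map_prod]
    simp only [map_sub, map_one, map_pow]
  refine IsPrimitiveRoot.mk_of_lt _ n.succ_pos (by rw [← map_pow, h.pow_eq_one, map_one])
    fun l hl0 hln hl => ?_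
  obtain ⟨k, rfl⟩ : ∃ k, l = k + 1 := Nat.exists_eq_succ_of_ne_zero hl0.ne'
  exact hM (hprod ▸ Finset.prod_eq_zero (Finset.mem_range.2 (by omega)) (sub_eq_zero.2 hl.symm))

lemma ProperSpace.of_norm_algebraMap (𝕜 : Type*) [NontriviallyNormedField 𝕜]
    [LocallyCompactSpace 𝕜] [NormedField K] [Algebra 𝕜 K] [FiniteDimensional 𝕜 K]
    (h : ∀ x : 𝕜, ‖algebraMap 𝕜 K x‖ = ‖x‖) : ProperSpace K :=
  letI : NormedSpace 𝕜 K := { norm_smul_le := fun c x => by rw [Algebra.smul_def, norm_mul, h] }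
  FiniteDimensional.proper 𝕜 K

lemma Module.Finite.of_adjoin_root_of_unity {F : Type*} [Field F] [Field K] [Algebra F K]
    {ζ : K} {M : ℕ} (hζ : IsPrimitiveRoot ζ M) (hM : M ≠ 0) (h : Algebra.adjoin F {ζ} = ⊤) :
    Module.Finite F K := by
  have hint : IsIntegral F ζ :=
    IsIntegral.of_pow (Nat.pos_of_ne_zero hM) (by rw [hζ.pow_eq_one]; exact isIntegral_one)
  have := Algebra.finite_adjoin_simple_of_isIntegral hint
  rw [h] at this
  exact Module.Finite.equiv Subalgebra.topEquiv.toLinearEquiv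

section ResidueField

variable [NormedField K] [IsUltrametricDist K]

@[simp]
lemma mem_ringOfIntegers {x : K} : x ∈ ringOfIntegers K ↔ ‖x‖ ≤ 1 := Iff.rfl

@[simp]
lemma mem_maxIdeal {x : ringOfIntegers K} : x ∈ maxIdeal K ↔ ‖(x : K)‖ < 1 := Iff.rfl

lemma isUnit_of_not_mem_maxIdeal {x : ringOfIntegers K} (hx : x ∉ maxIdeal K) : IsUnit x := by
  have hx1 : ‖(x : K)‖ = 1 := le_antisymm x.2 (not_lt.1 hx)
  have hx0 : (x : K) ≠ 0 := norm_ne_zero_iff.1 (by rw [hx1]; exact one_ne_zero)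
  exact isUnit_iff_exists_inv.2
    ⟨⟨(x : K)⁻¹, by simp [hx1]⟩, Subtype.ext (mul_inv_cancel₀ hx0)⟩

instance : (maxIdeal K).IsMaximal :=
  Ideal.isMaximal_iff.2 ⟨fun h => (show ‖(1 : K)‖ < 1 from h).ne norm_one,
    fun J _ _ hx hxJ =>
      (Ideal.eq_top_iff_one J).1 (Ideal.eq_top_of_isUnit_mem J hxJ (isUnit_of_not_mem_maxIdeal hx))⟩

instance : Field (ringOfIntegers K ⧸ maxIdeal K) := Ideal.Quotient.field _

lemma natCast_residue_eq_zero_iff (n : ℕ) :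
    (n : ringOfIntegers K ⧸ maxIdeal K) = 0 ↔ ‖(n : K)‖ < 1 := by
  rw [← map_natCast (Ideal.Quotient.mk (maxIdeal K)), Ideal.Quotient.eq_zero_iff_mem]
  simp

instance [ProperSpace K] : Finite (ringOfIntegers K ⧸ maxIdeal K) := by
  obtain ⟨t, ht, htfin, hcover⟩ := Metric.finite_approx_of_totallyBounded
    (isCompact_closedBall (0 : K) 1).totallyBounded 1 one_pos
  have : Finite t := htfin.to_subtype
  refine Finite.of_surjective (fun y : t => Ideal.Quotient.mk (maxIdeal K)
    ⟨y, by simpa using ht y.2⟩) fun z => ?_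
  obtain ⟨x, rfl⟩ := Ideal.Quotient.mk_surjective z
  obtain ⟨y, hyt, hxy⟩ := Set.mem_iUnion₂.1 (hcover (by simpa using mem_ringOfIntegers.1 x.2))
  refine ⟨⟨y, hyt⟩, Ideal.Quotient.eq.2 ?_⟩
  rw [mem_maxIdeal, AddSubgroupClass.coe_sub, ← dist_eq_norm, dist_comm]
  simpa using hxy

lemma one_lt_card_residue [ProperSpace K] : 1 < Nat.card (ringOfIntegers K ⧸ maxIdeal K) :=
  Finite.one_lt_card

lemma prime_dvd_card_residue [ProperSpace K] {p : ℕ} (hp : p.Prime) (h : ‖(p : K)‖ < 1) :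
    p ∣ Nat.card (ringOfIntegers K ⧸ maxIdeal K) := by
  have := Fact.mk hp
  have := Fintype.ofFinite (ringOfIntegers K ⧸ maxIdeal K)
  rw [Nat.card_eq_fintype_card, ← prime_dvd_char_iff_dvd_card,
    CharP.ringChar_of_prime_eq_zero hp ((natCast_residue_eq_zero_iff p).2 h)]

lemma dvd_card_residue_sub_one [ProperSpace K] {ζ : K} {M : ℕ} (hζ : IsPrimitiveRoot ζ M)
    (hM : ‖(M : K)‖ = 1) : M ∣ Nat.card (ringOfIntegers K ⧸ maxIdeal K) - 1 := by
  have hM0 : M ≠ 0 := by rintro rfl; simp at hM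
  let ζ' : ringOfIntegers K := ⟨ζ, (hζ.isOfFinOrder hM0).norm_eq_one.le⟩
  have hζ' : IsPrimitiveRoot ζ' M := hζ.of_map_of_injective (f := (ringOfIntegers K).subtype)
    Subtype.val_injective
  have hz := hζ'.map_of_natCast_ne_zero (Ideal.Quotient.mk (maxIdeal K))
    (fun h => (natCast_residue_eq_zero_iff M).1 h |>.ne hM)
  have := Fintype.ofFinite (ringOfIntegers K ⧸ maxIdeal K)
  rw [Nat.card_eq_fintype_card]
  exact hz.dvd_of_pow_eq_one _ (FiniteField.pow_card_sub_one_eq_one _ (hz.ne_zero hM0))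

end ResidueField

section Padic

variable {p : ℕ} [Fact p.Prime] [NormedField K] [Algebra ℚ_[p] K]

lemma norm_natCast_of_norm_algebraMap (hiso : ∀ x : ℚ_[p], ‖algebraMap ℚ_[p] K x‖ = ‖x‖)
    (n : ℕ) : ‖(n : K)‖ = ‖(n : ℚ_[p])‖ := by
  rw [← map_natCast (algebraMap ℚ_[p] K), hiso]

lemma norm_natCast_le_inv_of_dvd (hiso : ∀ x : ℚ_[p], ‖algebraMap ℚ_[p] K x‖ = ‖x‖) {n : ℕ}
    (h : p ∣ n) : ‖(n : K)‖ ≤ (p : ℝ)⁻¹ := by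
  obtain ⟨t, rfl⟩ := h
  rw [norm_natCast_of_norm_algebraMap hiso, Nat.cast_mul, norm_mul, Padic.norm_p]
  exact mul_le_of_le_one_right (by positivity) (IsUltrametricDist.norm_natCast_le_one ℚ_[p] t)

lemma card_residue_of_adjoin_root_of_unity [IsUltrametricDist K] {M : ℕ} (hpM : ¬ p ∣ M)
    (hiso : ∀ x : ℚ_[p], ‖algebraMap ℚ_[p] K x‖ = ‖x‖) {ζ : K} (hζ : IsPrimitiveRoot ζ M)
    (hgen : Algebra.adjoin ℚ_[p] {ζ} = ⊤) :
    1 < Nat.card (ringOfIntegers K ⧸ maxIdeal K) ∧ p ∣ Nat.card (ringOfIntegers K ⧸ maxIdeal K) ∧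
      M ∣ Nat.card (ringOfIntegers K ⧸ maxIdeal K) - 1 := by
  have hp : p.Prime := Fact.out
  have hM : ‖(M : K)‖ = 1 := by
    rw [norm_natCast_of_norm_algebraMap hiso, Padic.norm_natCast_eq_one_iff]
    exact (Nat.Prime.coprime_iff_not_dvd hp).2 hpM
  have : FiniteDimensional ℚ_[p] K := .of_adjoin_root_of_unity hζ (by rintro rfl; simp at hM) hgen
  have : ProperSpace K := .of_norm_algebraMap ℚ_[p] hiso
  refine ⟨one_lt_card_residue, prime_dvd_card_residue hp ?_, dvd_card_residue_sub_one hζ hM⟩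
  rw [norm_natCast_of_norm_algebraMap hiso]
  exact Padic.norm_natCast_lt_one_iff.2 dvd_rfl

end Padic

lemma Int.exists_pos_le_dvd_sub (a : ℤ) {n : ℕ} (hn : 0 < n) :
    ∃ i : ℕ, 0 < i ∧ i ≤ n ∧ (n : ℤ) ∣ a - i := by
  have h0 := Int.emod_nonneg (a - 1) (by omega : (n : ℤ) ≠ 0)
  have h1 := Int.emod_lt_of_pos (a - 1) (by omega : (0 : ℤ) < n)
  refine ⟨((a - 1) % n).toNat + 1, by omega, by omega, (a - 1) / n, ?_⟩
  have := Int.mul_ediv_add_emod (a - 1) n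
  push_cast
  omega

lemma mul_dvd_mul_pow_succ_sub {R : Type*} [CommRing R] {p M q l i : R} (hpq : p ∣ q)
    (hMq : M ∣ q - 1) (hi : p * M ∣ l * q - i) (N : ℕ) : p * M ∣ l * q ^ (N + 1) - i := by
  have h : l * q ^ (N + 1) - i = l * (q * (q ^ N - 1)) + (l * q - i) := by ring
  rw [h]
  exact dvd_add ((mul_dvd_mul hpq (hMq.trans (sub_one_dvd_pow_sub_one q N))).mul_left l) hi

lemma exists_dvd_mul_pow_sub {p M q : ℕ} (hp : 0 < p) (hM : 0 < M) (hq : 1 ≤ q) (hpq : p ∣ q)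
    (hMq : M ∣ q - 1) (l : ℕ) : ∃ i, 0 < i ∧ i ≤ p * M ∧ p ∣ i ∧
      ∀ N, 1 ≤ N → (p * M : ℤ) ∣ ((l * q ^ N : ℕ) : ℤ) - i := by
  obtain ⟨i, hi0, hipM, hi⟩ := Int.exists_pos_le_dvd_sub (l * q) (Nat.mul_pos hp hM)
  push_cast at hi
  have hpq' : (p : ℤ) ∣ q := Int.natCast_dvd_natCast.2 hpq
  have hMq' : (M : ℤ) ∣ q - 1 := by simpa [Nat.cast_sub hq] using Int.natCast_dvd_natCast.2 hMq
  refine ⟨i, hi0, hipM, Int.natCast_dvd_natCast.1 ?_, fun N hN => ?_⟩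
  · exact (dvd_sub_right (hpq'.mul_left l)).1 ((dvd_mul_right _ _).trans hi)
  · obtain ⟨N, rfl⟩ := Nat.exists_eq_add_of_le' hN
    push_cast
    exact mul_dvd_mul_pow_succ_sub hpq' hMq' hi N

theorem tendsto_along_q_powers_general (p M : ℕ) [Fact p.Prime] (hpM : ¬ p ∣ M)
    [NormedField K] [CompleteSpace K] [IsUltrametricDist K] [Algebra ℚ_[p] K]
    (hiso : ∀ x : ℚ_[p], ‖algebraMap ℚ_[p] K x‖ = ‖x‖)
    (ζ : K) (hζ : IsPrimitiveRoot ζ M) (hgen : Algebra.adjoin ℚ_[p] {ζ} = ⊤)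
    (q : ℕ) (hq : q = Nat.card ((ringOfIntegers K) ⧸ (maxIdeal K)))
    (n₀ : ℕ) (f : ℕ → K) (hf : IsMPSF p M n₀ f)
    (l : ℕ) (hl0 : 0 < l) :
    ∃ (r : ℝ) (P : ℕ → K), (p : ℝ)⁻¹ < r ∧ PSConvOn P r ∧
      (∃ N₀ : ℕ, ∀ N : ℕ, N₀ ≤ N → f (l * q ^ N) = evalPS P ((l : K) * (q : K) ^ N)) ∧
      Filter.Tendsto (fun N : ℕ => f (l * q ^ N)) Filter.atTop (nhds (evalPS P 0)) := by
  have hp : p.Prime := Fact.out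
  obtain ⟨hq1, hpq, hMq⟩ := hq ▸ card_residue_of_adjoin_root_of_unity hpM hiso hζ hgen
  obtain ⟨i, hi0, hipM, hpi, hdvd⟩ := exists_dvd_mul_pow_sub hp.pos
    (Nat.pos_of_ne_zero (by rintro rfl; exact hpM (dvd_zero p))) hq1.le hpq hMq l
  obtain ⟨r, c, hpr, hc, hfc⟩ := hf i hi0 hipM
  have hr : 0 < r := (inv_pos.2 (Nat.cast_pos.2 hp.pos)).trans hpr
  have hsmall {n : ℕ} (h : p ∣ n) : ‖(n : K)‖ ≤ r :=
    (norm_natCast_le_inv_of_dvd hiso h).trans hpr.le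
  have hi_small : ‖-(i : K)‖ ≤ r := (norm_neg (i : K)).trans_le (hsmall hpi)
  have hkey : ∀ᶠ N in atTop,
      f (l * q ^ N) = evalPS (changeOriginCoeff c (-(i : K))) ((l : K) * (q : K) ^ N) := by
    filter_upwards [eventually_ge_atTop 1,
      (tendsto_pow_atTop_atTop_of_one_lt hq1).eventually_ge_atTop n₀] with N hN hqN
    have hx := hsmall ((hpq.pow (Nat.one_le_iff_ne_zero.1 hN)).mul_left l)
    rw [hfc _ (hqN.trans (Nat.le_mul_of_pos_left _ hl0)) (hdvd N hN), sub_eq_add_neg,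
      ← hc.evalPS_changeOriginCoeff hi_small hx, Nat.cast_mul, Nat.cast_pow]
  refine ⟨r, changeOriginCoeff c (-(i : K)), hpr, hc.changeOrigin hr hi_small,
    eventually_atTop.1 hkey, ?_⟩
  have hq_lt : ‖(q : K)‖ < 1 := (norm_natCast_le_inv_of_dvd hiso hpq).trans_lt
    (inv_lt_one_of_one_lt₀ (by exact_mod_cast hp.one_lt))
  have hlim : Tendsto (fun N => (l : K) * (q : K) ^ N) atTop (𝓝 0) := by
    simpa using (tendsto_pow_atTop_nhds_zero_of_norm_lt_one hq_lt).const_mul (l : K)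
  exact ((hc.changeOrigin hr hi_small).continuousAt_evalPS_zero hr |>.tendsto.comp hlim).congr'
    (hkey.mono fun _ h => h.symm)

/-- if `q` is the cardinality of the residue field of `K`, `f` is an `M`-power
series function and `0 < l ≤ pM`, then there is a power series `P`, convergent on a closed
disc of radius `r > |p|`, with `f (l q^N) = P (l q^N)` for all sufficiently large `N`; in
particular, `lim_{N → ∞} f (l q^N)` exists and equals `P 0`. -/
theorem tendsto_along_q_powers (p M : ℕ) [Fact p.Prime] (hM : 1 ≤ M) (hpM : ¬ p ∣ M)
    [NormedField K] [CompleteSpace K] [IsUltrametricDist K] [Algebra ℚ_[p] K]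
    (hiso : ∀ x : ℚ_[p], ‖algebraMap ℚ_[p] K x‖ = ‖x‖)
    (ζ : K) (hζ : IsPrimitiveRoot ζ M) (hgen : Algebra.adjoin ℚ_[p] {ζ} = ⊤)
    (q : ℕ) (hq : q = Nat.card ((ringOfIntegers K) ⧸ (maxIdeal K)))
    (n₀ : ℕ) (f : ℕ → K) (hf : IsMPSF p M n₀ f)
    (l : ℕ) (hl0 : 0 < l) (hl : l ≤ p * M) :
    ∃ (r : ℝ) (P : ℕ → K), (p : ℝ)⁻¹ < r ∧ PSConvOn P r ∧
      (∃ N₀ : ℕ, ∀ N : ℕ, N₀ ≤ N → f (l * q ^ N) = evalPS P ((l : K) * (q : K) ^ N)) ∧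
      Filter.Tendsto (fun N : ℕ => f (l * q ^ N)) Filter.atTop (nhds (evalPS P 0)) :=
  tendsto_along_q_powers_general p M hpM hiso ζ hζ hgen q hq n₀ f hf l hl0

end
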